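/- Let m be a positive integer and let x be a real number with 0 < x < π. Then lim_{α→2m} [ π x^{α−1} / (4 Γ(α) sin(πα/2)) + (−1)^{m−1} λ(α−2m+1) x^{2m−1}/(2m−1)! ] = (−1)^m x^{2m−1} ( log(x/2) − H_{2m−1} ) / (2·(2m−1)!). -/

import Mathlib

/-!
Put `c = 2m`, `n = 2m - 1` and `g α = x^(α-1) / Γ(α)`, so that `g c = x^n / n!`. Since
`sin (πα/2) = (-1)^m sin (π(α-c)/2)` and `1/sin t = 1/t + o(1)`, the first summand is
`(-1)^m (g c / (2(α-c)) + g'(c)/2) + o(1)`, where `g'(c) = g c (log x + γ - H_n)` because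
`Γ'(n+1) = n! (H_n - γ)`. On the other side, the Laurent expansion `ζ(s) = 1/(s-1) + γ + o(1)`
and `1 - 2^(-s) = 1/2 + (log 2 / 2)(s-1) + o(s-1)` give
`λ(s) = 1/(2(s-1)) + (γ + log 2)/2 + o(1)` at `s = 1`. The two poles cancel, and the constant
terms combine to `(-1)^m x^n (log (x/2) - H_n) / (2 n!)`.
-/

open Filter Topology Real

/-- The Dirichlet lambda function `λ(s) = (1 - 2^(-s)) ζ(s)`, equal to
`∑_{n=1}^∞ (2n-1)^(-s)` for `Re s > 1`. -/
noncomputable def dirichletLambda (s : ℂ) : ℂ := (1 - (2 : ℂ) ^ (-s)) * riemannZeta s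

open scoped Nat

theorem tendsto_sub_sin_div_sq : Tendsto (fun t : ℝ => (t - sin t) / t ^ 2) (𝓝 0) (𝓝 0) := by
  refine squeeze_zero_norm (fun t => ?_) ((continuous_abs.div_const 6).tendsto' 0 0 (by simp))
  rcases eq_or_ne t 0 with rfl | ht
  · simp
  rw [norm_div, norm_pow, Real.norm_eq_abs, div_le_iff₀ (by positivity)]
  calc |t - sin t| ≤ |t| ^ 3 / 6 := abs_sub_sin_le t
    _ = |t| / 6 * |t| ^ 2 := by ring

theorem tendsto_inv_sin_sub_inv : Tendsto (fun t : ℝ => (sin t)⁻¹ - t⁻¹) (𝓝[≠] 0) (𝓝 0) := by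
  have hsinc : Tendsto sinc (𝓝[≠] 0) (𝓝 1) :=
    sinc_zero ▸ continuous_sinc.continuousAt.tendsto.mono_left nhdsWithin_le_nhds
  have h := (tendsto_sub_sin_div_sq.mono_left nhdsWithin_le_nhds).mul (hsinc.inv₀ one_ne_zero)
  rw [zero_mul] at h
  refine h.congr' ?_
  filter_upwards [self_mem_nhdsWithin, hsinc.eventually_ne one_ne_zero] with t (ht : t ≠ 0) hs
  rw [sinc_of_ne_zero ht] at hs ⊢
  have hsin : sin t ≠ 0 := fun h => hs (by simp [h])
  field_simp

theorem tendsto_const_mul_sub_nhdsNE {a : ℝ} (ha : a ≠ 0) (c : ℝ) :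
    Tendsto (fun t : ℝ => a * (t - c)) (𝓝[≠] c) (𝓝[≠] 0) := by
  refine tendsto_nhdsWithin_of_tendsto_nhds_of_eventually_within _ ?_ ?_
  · exact ((continuous_const.mul (continuous_id.sub continuous_const)).tendsto' c 0
      (by simp)).mono_left nhdsWithin_le_nhds
  · filter_upwards [self_mem_nhdsWithin] with t (ht : t ≠ c)
    exact mul_ne_zero ha (sub_ne_zero.mpr ht)

theorem HasDerivAt.tendsto_mul_div_sin_sub_div {g : ℝ → ℝ} {g' c : ℝ} (hg : HasDerivAt g g' c)
    {a : ℝ} (ha : a ≠ 0) :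
    Tendsto (fun t => a * g t / Real.sin (a * (t - c)) - g c / (t - c)) (𝓝[≠] c) (𝓝 g') := by
  have h := (((hg.continuousAt.tendsto.mono_left nhdsWithin_le_nhds).const_mul a).mul
    (tendsto_inv_sin_sub_inv.comp (tendsto_const_mul_sub_nhdsNE ha c))).add
    (hasDerivAt_iff_tendsto_slope.mp hg)
  rw [mul_zero, zero_add] at h
  refine h.congr fun t => ?_
  simp only [Function.comp_apply, slope_def_field, div_eq_mul_inv, mul_inv]
  field_simp
  ring

theorem hasDerivAt_rpow_sub_one_div_Gamma_nat {x : ℝ} (hx : 0 < x) (n : ℕ) :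
    HasDerivAt (fun s => x ^ (s - 1) / Gamma s)
      (x ^ n / n ! * (log x + eulerMascheroniConstant - harmonic n)) ((n : ℝ) + 1) := by
  have hpow := ((hasDerivAt_id ((n : ℝ) + 1)).sub_const 1).const_rpow hx
  have hfac : Gamma (n + 1) ≠ 0 := by rw [Gamma_nat_eq_factorial]; positivity
  refine (hpow.div (hasDerivAt_Gamma_nat n) hfac).congr_deriv ?_
  rw [Gamma_nat_eq_factorial, id, add_sub_cancel_right, rpow_natCast]
  field_simp
  ring

theorem hasDerivAt_one_sub_two_cpow_neg :
    HasDerivAt (fun s : ℂ => 1 - (2 : ℂ) ^ (-s)) (Real.log 2 / 2) 1 := by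
  refine (((hasDerivAt_neg (1 : ℂ)).const_cpow (c := 2) (Or.inl two_ne_zero)).const_sub 1
    |>.congr_deriv ?_)
  simp only [Complex.cpow_neg_one, mul_neg, mul_one, neg_neg, Complex.ofNat_log]
  ring

theorem tendsto_dirichletLambda_sub_one_div :
    Tendsto (fun s => dirichletLambda s - 1 / (2 * (s - 1))) (𝓝[≠] 1)
      (𝓝 ((eulerMascheroniConstant + Real.log 2) / 2)) := by
  have hw := hasDerivAt_one_sub_two_cpow_neg
  have h := ((hw.continuousAt.tendsto.mono_left nhdsWithin_le_nhds).mul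
    tendsto_riemannZeta_sub_one_div).add (hasDerivAt_iff_tendsto_slope.mp hw)
  convert h using 2
  · simp only [dirichletLambda, slope_def_field, Complex.cpow_neg_one, one_div, mul_inv]
    ring
  · simp only [Complex.ofNat_log, Complex.cpow_neg_one]
    ring

theorem tendsto_ofReal_sub_add_nhdsNE (c : ℝ) (b : ℂ) :
    Tendsto (fun t : ℝ => (t : ℂ) - c + b) (𝓝[≠] c) (𝓝[≠] b) := by
  refine tendsto_nhdsWithin_of_tendsto_nhds_of_eventually_within _ ?_ ?_
  · exact (((Complex.continuous_ofReal.sub continuous_const).add continuous_const).tendsto' c b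
      (by simp)).mono_left nhdsWithin_le_nhds
  · filter_upwards [self_mem_nhdsWithin] with t (ht : t ≠ c)
    simpa [sub_eq_zero] using ht

theorem pi_mul_cpow_div_Gamma_mul_sin_eq {x : ℝ} (hx : 0 ≤ x) (m : ℕ) (α : ℝ) :
    (π : ℂ) * (x : ℂ) ^ ((α : ℂ) - 1) / (4 * Complex.Gamma α * Complex.sin (π * α / 2)) =
      ((-1) ^ m / 2 * (π / 2 * (x ^ (α - 1) / Gamma α) / Real.sin (π / 2 * (α - 2 * m))) : ℝ) := by
  have hsin : Real.sin (π * α / 2) = (-1) ^ m * Real.sin (π / 2 * (α - 2 * m)) := by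
    rw [← sin_add_nat_mul_pi]
    ring_nf
  have hcast : (π : ℂ) * (x : ℂ) ^ ((α : ℂ) - 1) / (4 * Complex.Gamma α * Complex.sin (π * α / 2))
      = ((π * x ^ (α - 1) / (4 * Gamma α * Real.sin (π * α / 2)) : ℝ) : ℂ) := by
    push_cast [Complex.ofReal_cpow hx, ← Complex.Gamma_ofReal]
    rfl
  rw [hcast, hsin]
  congr 1
  rcases neg_one_pow_eq_or ℝ m with h | h <;> rw [h] <;> ring

theorem lambda_singular_limit_even (m : ℕ) (hm : 0 < m) (x : ℝ) (hx0 : 0 < x) :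
    Filter.Tendsto
      (fun α : ℝ =>
        (π : ℂ) * (x : ℂ) ^ ((α : ℂ) - 1) /
            (4 * Complex.Gamma (α : ℂ) * Complex.sin ((π : ℂ) * α / 2)) +
          (-1) ^ (m - 1) * dirichletLambda ((α : ℂ) - 2 * m + 1) * (x : ℂ) ^ (2 * m - 1) /
            (Nat.factorial (2 * m - 1) : ℂ))
      (𝓝[≠] (2 * m : ℝ))
      (𝓝 ((-1) ^ m * (x : ℂ) ^ (2 * m - 1) *
          ((Real.log (x / 2) : ℂ) - (harmonic (2 * m - 1) : ℂ)) /
        (2 * (Nat.factorial (2 * m - 1) : ℂ)))) := by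
  set n := 2 * m - 1
  have hc : (n : ℝ) + 1 = 2 * m := by norm_cast; omega
  have hsign : (-1 : ℂ) ^ m = -(-1) ^ (m - 1) := by
    conv_lhs => rw [← Nat.sub_add_cancel hm, pow_succ, mul_neg_one]
  have hgc : x ^ ((n : ℝ) + 1 - 1) / Gamma (n + 1) = x ^ n / n ! := by
    rw [add_sub_cancel_right, rpow_natCast, Gamma_nat_eq_factorial]
  have hfirst := (hasDerivAt_rpow_sub_one_div_Gamma_nat hx0 n).tendsto_mul_div_sin_sub_div
    (a := π / 2) (by positivity)
  rw [hgc, hc] at hfirst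
  have hlambda := tendsto_dirichletLambda_sub_one_div.comp (tendsto_ofReal_sub_add_nhdsNE (2 * m) 1)
  convert (hfirst.ofReal.const_mul ((-1) ^ m / 2 : ℂ)).add
    (hlambda.const_mul ((-1) ^ (m - 1) * x ^ n / n ! : ℂ)) using 2
  · rw [pi_mul_cpow_div_Gamma_mul_sin_eq hx0.le m]
    simp only [Function.comp_apply]
    push_cast
    rw [hsign]
    simp only [div_eq_mul_inv, mul_inv]
    ring
  · rw [Real.log_div hx0.ne' two_ne_zero, hsign]
    push_cast
    field_simp
    ring
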